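/- Let G and H be connected simple graphs, each with at least one edge. Then the minimum edge-degree of their strong product satisfies ξ(G ⊠ H) = min{ξ(G)·δ(H) + 4·δ(H) + ξ(G), δ(G)·ξ(H) + 4·δ(G) + ξ(H)}. -/

import Mathlib

/-- The strong product of two simple graphs. -/
def strongProd {α β : Type*} (G : SimpleGraph α) (H : SimpleGraph β) :
    SimpleGraph (α × β) where
  Adj x y := (x.1 = y.1 ∧ H.Adj x.2 y.2) ∨ (x.2 = y.2 ∧ G.Adj x.1 y.1) ∨
    (G.Adj x.1 y.1 ∧ H.Adj x.2 y.2)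
  symm := by
    constructor
    rintro ⟨a₁, a₂⟩ ⟨b₁, b₂⟩ (⟨h1, h2⟩ | ⟨h1, h2⟩ | ⟨h1, h2⟩)
    · exact Or.inl ⟨h1.symm, h2.symm⟩
    · exact Or.inr (Or.inl ⟨h1.symm, h2.symm⟩)
    · exact Or.inr (Or.inr ⟨h1.symm, h2.symm⟩)
  loopless := by
    constructor
    rintro ⟨a₁, a₂⟩ (⟨_, h⟩ | ⟨_, h⟩ | ⟨h, _⟩)
    · exact H.irrefl h
    · exact G.irrefl h
    · exact G.irrefl h

/-- The degree of a vertex. -/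
noncomputable def deg {α : Type*} (G : SimpleGraph α) (v : α) : ℕ := (G.neighborSet v).ncard

/-- The minimum degree `δ(G)`. -/
noncomputable def minDeg {α : Type*} (G : SimpleGraph α) : ℕ := sInf {d | ∃ v, d = deg G v}

/-- The number of edges `e(G)`. -/
noncomputable def numEdges {α : Type*} (G : SimpleGraph α) : ℕ := G.edgeSet.ncard

/-- The minimum edge-degree `ξ(G) = min {d(u) + d(v) - 2 : uv ∈ E(G)}`. -/
noncomputable def minEdgeDeg {α : Type*} (G : SimpleGraph α) : ℕ :=
  sInf {d | ∃ u v, G.Adj u v ∧ d = deg G u + deg G v - 2}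

/-- The edge-connectivity `λ(G)`. -/
noncomputable def edgeConn {α : Type*} (G : SimpleGraph α) : ℕ :=
  sInf {k | ∃ S : Set (Sym2 α), S ⊆ G.edgeSet ∧ S.ncard = k ∧
    ¬ (G.deleteEdges S).Connected}

/-- `S` is a restricted edge-cut of `G`: deleting `S` disconnects `G` and every
component of `G - S` has at least two vertices. -/
def IsRestrictedEdgeCut {α : Type*} (G : SimpleGraph α) (S : Set (Sym2 α)) : Prop :=
  S ⊆ G.edgeSet ∧ ¬ (G.deleteEdges S).Connected ∧
    ∀ v : α, 2 ≤ ((G.deleteEdges S).connectedComponentMk v).supp.ncard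

/-- The restricted edge-connectivity `λ'(G)`. -/
noncomputable def restEdgeConn {α : Type*} (G : SimpleGraph α) : ℕ :=
  sInf {k | ∃ S : Set (Sym2 α), IsRestrictedEdgeCut G S ∧ S.ncard = k}

/-- `G` is super restricted edge-connected: every minimum restricted edge-cut
isolates an edge, i.e. some component of `G - S` has exactly two vertices. -/
def SuperRestrictedEdgeConnected {α : Type*} (G : SimpleGraph α) : Prop :=
  ∀ S : Set (Sym2 α), IsRestrictedEdgeCut G S → S.ncard = restEdgeConn G →
    ∃ v : α, ((G.deleteEdges S).connectedComponentMk v).supp.ncard = 2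

/-- The set `[X, Y]_G` of edges of `G` with one end in `X` and the other in `Y`. -/
def edgesBetween {α : Type*} (G : SimpleGraph α) (X Y : Set α) : Set (Sym2 α) :=
  {e | e ∈ G.edgeSet ∧ ∃ u ∈ X, ∃ v ∈ Y, e = s(u, v)}

/-
Adding one to every degree turns the strong product into a product: the closed
neighbourhood of `(u, w)` in `G ⊠ H` is `N[u] × N[w]`, so `d(u, w) + 1 = (d(u) + 1)(d(w) + 1)`.
Writing `a = d_G + 1` and `b = d_H + 1`, the edge `(x₁, x₂)(y₁, y₂)` of `G ⊠ H` thus has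
edge-degree `a(x₁) b(x₂) + a(y₁) b(y₂) - 4`. Either `x₁y₁` is an edge of `G`, so that
`a(x₁) + a(y₁) ≥ ξ(G) + 4` and both `b`'s are at least `δ(H) + 1`, or `x₁ = y₁` and `x₂y₂` is an
edge of `H`, with the roles of the factors exchanged. An edge realising `ξ(G)` in the copy of `G`
over a vertex of minimum degree of `H` (or vice versa) attains the resulting bound
`ξ(G ⊠ H) + 4 = min((ξ(G) + 4)(δ(H) + 1), (δ(G) + 1)(ξ(H) + 4))`.
-/

local infixl:70 " ⊠ " => strongProd

section

variable {V W : Type*}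

lemma neighborSet_strongProd (G : SimpleGraph V) (H : SimpleGraph W) (u : V) (w : W) :
    (G ⊠ H).neighborSet (u, w) =
      (insert u (G.neighborSet u) ×ˢ insert w (H.neighborSet w)) \ {(u, w)} := by
  ext ⟨x, y⟩
  simp only [SimpleGraph.mem_neighborSet, strongProd, Set.mem_sdiff, Set.mem_prod,
    Set.mem_insert_iff, Set.mem_singleton_iff, Prod.mk.injEq]
  constructor
  · rintro (⟨rfl, h⟩ | ⟨rfl, h⟩ | ⟨hG, hH⟩)
    · exact ⟨⟨.inl rfl, .inr h⟩, fun ⟨_, hy⟩ => h.ne hy.symm⟩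
    · exact ⟨⟨.inr h, .inl rfl⟩, fun ⟨hx, _⟩ => h.ne hx.symm⟩
    · exact ⟨⟨.inr hG, .inr hH⟩, fun ⟨hx, _⟩ => hG.ne hx.symm⟩
  · rintro ⟨⟨rfl | hx, rfl | hy⟩, hne⟩
    · exact absurd ⟨rfl, rfl⟩ hne
    · exact .inl ⟨rfl, hy⟩
    · exact .inr (.inl ⟨rfl, hx⟩)
    · exact .inr (.inr ⟨hx, hy⟩)

lemma minDeg_le_deg (G : SimpleGraph V) (v : V) : minDeg G ≤ deg G v :=
  Nat.sInf_le ⟨v, rfl⟩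

lemma exists_deg_eq_minDeg [Nonempty V] (G : SimpleGraph V) : ∃ v, deg G v = minDeg G := by
  obtain ⟨v, hv⟩ := Nat.sInf_mem (⟨_, Classical.arbitrary V, rfl⟩ : {d | ∃ v, d = deg G v}.Nonempty)
  exact ⟨v, hv.symm⟩

lemma mul_le_mul_add_mul {A B p q r s : ℕ} (hpq : A ≤ p + q) (hr : B ≤ r) (hs : B ≤ s) :
    A * B ≤ p * r + q * s :=
  calc A * B ≤ (p + q) * B := Nat.mul_le_mul_right B hpq
    _ = p * B + q * B := add_mul p q B
    _ ≤ p * r + q * s := add_le_add (Nat.mul_le_mul_left p hr) (Nat.mul_le_mul_left q hs)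

section Finite

variable [Finite V] {G : SimpleGraph V}

lemma deg_pos_of_adj {u v : V} (h : G.Adj u v) : 0 < deg G u :=
  (Set.ncard_pos (Set.toFinite _)).mpr ⟨v, h⟩

lemma minEdgeDeg_add_two_le {u v : V} (h : G.Adj u v) :
    minEdgeDeg G + 2 ≤ deg G u + deg G v := by
  have : minEdgeDeg G ≤ deg G u + deg G v - 2 := Nat.sInf_le ⟨u, v, h, rfl⟩
  have := deg_pos_of_adj h
  have := deg_pos_of_adj h.symm
  omega

lemma exists_adj_minEdgeDeg_add_two_eq (hE : G.edgeSet.Nonempty) :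
    ∃ u v, G.Adj u v ∧ minEdgeDeg G + 2 = deg G u + deg G v := by
  obtain ⟨e, he⟩ := hE
  induction e using Sym2.ind with
  | _ a b =>
    obtain ⟨u, v, h, hmin⟩ := Nat.sInf_mem (⟨_, a, b, he, rfl⟩ :
      {d | ∃ u v, G.Adj u v ∧ d = deg G u + deg G v - 2}.Nonempty)
    have := deg_pos_of_adj h
    have := deg_pos_of_adj h.symm
    exact ⟨u, v, h, by rw [minEdgeDeg, hmin]; omega⟩

lemma minEdgeDeg_add_four_mul_le (H : SimpleGraph W) {u v : V} (h : G.Adj u v) (w w' : W) :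
    (minEdgeDeg G + 4) * (minDeg H + 1) ≤
      (deg G u + 1) * (deg H w + 1) + (deg G v + 1) * (deg H w' + 1) := by
  refine mul_le_mul_add_mul ?_ (by simpa using minDeg_le_deg H w)
    (by simpa using minDeg_le_deg H w')
  linarith [minEdgeDeg_add_two_le h]

end Finite

section StrongProd

variable [Finite V] [Finite W] {G : SimpleGraph V} {H : SimpleGraph W}

lemma deg_strongProd_add_one (G : SimpleGraph V) (H : SimpleGraph W) (x : V × W) :
    deg (G ⊠ H) x + 1 = (deg G x.1 + 1) * (deg H x.2 + 1) := by
  obtain ⟨u, w⟩ := x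
  have hmem : (u, w) ∈ insert u (G.neighborSet u) ×ˢ insert w (H.neighborSet w) := by simp
  have hcard := Set.ncard_sdiff_singleton_add_one hmem
  rw [Set.ncard_prod, Set.ncard_insert_of_notMem (by simp), Set.ncard_insert_of_notMem (by simp)]
    at hcard
  rwa [deg, neighborSet_strongProd]

lemma minEdgeDeg_strongProd_add_four_le {x y : V × W} (h : (G ⊠ H).Adj x y) :
    minEdgeDeg (G ⊠ H) + 4 ≤
      (deg G x.1 + 1) * (deg H x.2 + 1) + (deg G y.1 + 1) * (deg H y.2 + 1) := by
  rw [← deg_strongProd_add_one, ← deg_strongProd_add_one]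
  linarith [minEdgeDeg_add_two_le h]

lemma min_le_of_strongProd_adj {x y : V × W} (h : (G ⊠ H).Adj x y) :
    min ((minEdgeDeg G + 4) * (minDeg H + 1)) ((minDeg G + 1) * (minEdgeDeg H + 4)) ≤
      (deg G x.1 + 1) * (deg H x.2 + 1) + (deg G y.1 + 1) * (deg H y.2 + 1) := by
  obtain ⟨hx, hH⟩ | ⟨_, hG⟩ | ⟨hG, _⟩ := h
  · refine min_le_of_right_le ?_
    rw [hx, mul_comm, mul_comm (deg G y.1 + 1), mul_comm (deg G y.1 + 1)]
    exact minEdgeDeg_add_four_mul_le G hH y.1 y.1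
  all_goals exact min_le_of_left_le (minEdgeDeg_add_four_mul_le H hG x.2 y.2)

theorem minEdgeDeg_strongProd_add_four (hGe : G.edgeSet.Nonempty) (hHe : H.edgeSet.Nonempty) :
    minEdgeDeg (G ⊠ H) + 4 =
      min ((minEdgeDeg G + 4) * (minDeg H + 1)) ((minDeg G + 1) * (minEdgeDeg H + 4)) := by
  obtain ⟨u, v, huv, hξG⟩ := exists_adj_minEdgeDeg_add_two_eq hGe
  obtain ⟨u', v', huv', hξH⟩ := exists_adj_minEdgeDeg_add_two_eq hHe
  have : Nonempty V := ⟨u⟩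
  have : Nonempty W := ⟨u'⟩
  obtain ⟨y, hδG⟩ := exists_deg_eq_minDeg G
  obtain ⟨z, hδH⟩ := exists_deg_eq_minDeg H
  apply le_antisymm
  · apply le_min
    · have hle := minEdgeDeg_strongProd_add_four_le
        (show (G ⊠ H).Adj (u, z) (v, z) from .inr (.inl ⟨rfl, huv⟩))
      rw [hδH, ← add_mul] at hle
      rwa [show deg G u + 1 + (deg G v + 1) = minEdgeDeg G + 4 by omega] at hle
    · have hle := minEdgeDeg_strongProd_add_four_le
        (show (G ⊠ H).Adj (y, u') (y, v') from .inl ⟨rfl, huv'⟩)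
      rw [hδG, ← mul_add] at hle
      rwa [show deg H u' + 1 + (deg H v' + 1) = minEdgeDeg H + 4 by omega] at hle
  · obtain ⟨x, x', hxx', hξ⟩ := exists_adj_minEdgeDeg_add_two_eq
      (⟨s((u, z), (v, z)), .inr (.inl ⟨rfl, huv⟩)⟩ : (G ⊠ H).edgeSet.Nonempty)
    have := min_le_of_strongProd_adj hxx'
    rw [← deg_strongProd_add_one, ← deg_strongProd_add_one] at this
    omega

end StrongProd

end

theorem minEdgeDeg_strongProd_general {V W : Type*} [Fintype V] [Fintype W]
    (G : SimpleGraph V) (H : SimpleGraph W)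
    (hGe : G.edgeSet.Nonempty) (hHe : H.edgeSet.Nonempty) :
    minEdgeDeg (strongProd G H) =
      min (minEdgeDeg G * minDeg H + 4 * minDeg H + minEdgeDeg G)
        (minDeg G * minEdgeDeg H + 4 * minDeg G + minEdgeDeg H) := by
  have h := minEdgeDeg_strongProd_add_four hGe hHe
  rw [show (minEdgeDeg G + 4) * (minDeg H + 1) =
        minEdgeDeg G * minDeg H + 4 * minDeg H + minEdgeDeg G + 4 by ring,
    show (minDeg G + 1) * (minEdgeDeg H + 4) =
        minDeg G * minEdgeDeg H + 4 * minDeg G + minEdgeDeg H + 4 by ring,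
    min_add_add_right] at h
  omega

theorem minEdgeDeg_strongProd {V W : Type*} [Fintype V] [Fintype W]
    (G : SimpleGraph V) (H : SimpleGraph W) (hG : G.Connected) (hH : H.Connected)
    (hGe : G.edgeSet.Nonempty) (hHe : H.edgeSet.Nonempty) :
    minEdgeDeg (strongProd G H) =
      min (minEdgeDeg G * minDeg H + 4 * minDeg H + minEdgeDeg G)
        (minDeg G * minEdgeDeg H + 4 * minDeg G + minEdgeDeg H) :=
  minEdgeDeg_strongProd_general G H hGe hHe
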